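/- arXiv:1711.10724 — 6 statements merged into one kernel-verified Lean document; each statement's English description precedes it below -/
import Mathlib

section
/- For 1 < ν ≤ 2 and ω_k^{(ν)} := (-1)^k Γ(ν+1) / (Γ(ν/2 - k + 1) Γ(ν/2 + k + 1)), we have ω_k^{(ν)} ≤ 0 for all |k| ≥ 1. -/
/-- The fractional centered difference coefficients
`ω_k^{(ν)} = (-1)^k Γ(ν+1) / (Γ(ν/2 - k + 1) Γ(ν/2 + k + 1))`.
When `Γ` has a pole in the denominator, `Real.Gamma` vanishes there and the
division by zero yields `0`, matching the convention that the coefficient is `0`. -/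
noncomputable def omegaCoeff (ν : ℝ) (k : ℤ) : ℝ :=
  (-1 : ℝ) ^ k * Real.Gamma (ν + 1) /
    (Real.Gamma (ν / 2 - k + 1) * Real.Gamma (ν / 2 + k + 1))

lemma omegaCoeff_neg_arg (ν : ℝ) (k : ℤ) : omegaCoeff ν (-k) = omegaCoeff ν k := by
  unfold omegaCoeff
  have h1 : ((-1 : ℝ)) ^ (-k) = (-1 : ℝ) ^ k := by
    rw [zpow_neg, ← inv_zpow, inv_neg, inv_one]
  have h2 : ν / 2 - ((-k : ℤ) : ℝ) + 1 = ν / 2 + (k : ℝ) + 1 := by push_cast; ring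
  have h3 : ν / 2 + ((-k : ℤ) : ℝ) + 1 = ν / 2 - (k : ℝ) + 1 := by push_cast; ring
  rw [h1, h2, h3, mul_comm (Real.Gamma (ν / 2 + (k : ℝ) + 1))]

lemma gamma_shift (a : ℝ) (h : ∀ j : ℕ, a - j ≠ 0) (n : ℕ) :
    Real.Gamma (a + 1) = (∏ j ∈ Finset.range n, (a - j)) * Real.Gamma (a + 1 - n) := by
  induction n with
  | zero => simp
  | succ m ih =>
    have e1 : a + 1 - ((m + 1 : ℕ) : ℝ) = a - m := by push_cast; ring
    rw [Finset.prod_range_succ, e1, ih, mul_assoc]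
    congr 1
    rw [show a + 1 - (m : ℝ) = (a - m) + 1 by ring, Real.Gamma_add_one (h m)]

lemma prod_sign (a : ℝ) (ha : a < 1) (n : ℕ) :
    0 < (-1 : ℝ) ^ n * ∏ j ∈ Finset.range n, (a - 1 - (j : ℝ)) := by
  induction n with
  | zero => simp
  | succ m ih =>
    rw [Finset.prod_range_succ, pow_succ]
    have hneg : a - 1 - (m : ℝ) < 0 := by
      have : (0 : ℝ) ≤ m := Nat.cast_nonneg m
      linarith
    nlinarith [ih, hneg]

lemma omegaCoeff_key (ν : ℝ) (hν1 : 1 < ν) (hν2 : ν ≤ 2) (n : ℕ) :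
    omegaCoeff ν ((n : ℤ) + 1) ≤ 0 := by
  have ha0 : 0 < ν / 2 := by linarith
  have ha1 : ν / 2 ≤ 1 := by linarith
  unfold omegaCoeff
  have hpow : ((-1 : ℝ)) ^ ((n : ℤ) + 1) = (-1 : ℝ) ^ (n + 1) := by
    rw [show ((n : ℤ) + 1) = ((n + 1 : ℕ) : ℤ) by push_cast; ring, zpow_natCast]
  have hc : (((n : ℤ) + 1 : ℤ) : ℝ) = (n : ℝ) + 1 := by push_cast; ring
  rw [hpow, hc]
  have hG1 : 0 < Real.Gamma (ν + 1) := Real.Gamma_pos_of_pos (by linarith)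
  have hG2 : 0 < Real.Gamma (ν / 2 + ((n : ℝ) + 1) + 1) := by
    apply Real.Gamma_pos_of_pos
    have : (0 : ℝ) ≤ n := Nat.cast_nonneg n
    linarith
  cases n with
  | zero =>
    rw [show ν / 2 - (((0 : ℕ) : ℝ) + 1) + 1 = ν / 2 by push_cast; ring]
    have h0 : 0 < Real.Gamma (ν / 2) := Real.Gamma_pos_of_pos ha0
    apply div_nonpos_of_nonpos_of_nonneg
    · simp only [zero_add, pow_one]
      linarith
    · exact le_of_lt (mul_pos h0 hG2)
  | succ m =>
    rcases eq_or_lt_of_le hν2 with hE | hlt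
    · -- ν = 2 : the Gamma factor in the denominator vanishes
      have hz : Real.Gamma (ν / 2 - (((m + 1 : ℕ) : ℝ) + 1) + 1) = 0 := by
        rw [show ν / 2 - (((m + 1 : ℕ) : ℝ) + 1) + 1 = -(m : ℝ) by rw [hE]; push_cast; ring]
        exact Real.Gamma_neg_nat_eq_zero m
      rw [hz, zero_mul, div_zero]
    · -- ν < 2
      have ha1' : ν / 2 < 1 := by linarith
      have hja : ∀ j : ℕ, ν / 2 - (j : ℝ) ≠ 0 := by
        intro j
        rcases j with _ | j
        · simpa using ne_of_gt ha0
        · have h1j : (1 : ℝ) ≤ ((j + 1 : ℕ) : ℝ) := by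
            push_cast
            linarith [Nat.cast_nonneg (α := ℝ) j]
          have : ν / 2 - ((j + 1 : ℕ) : ℝ) < 0 := by linarith
          exact ne_of_lt this
      have hshift := gamma_shift (ν / 2) hja (m + 2)
      rw [show ν / 2 + 1 - ((m + 2 : ℕ) : ℝ) = ν / 2 - (((m + 1 : ℕ) : ℝ) + 1) + 1 by
        push_cast; ring] at hshift
      have hGa1 : 0 < Real.Gamma (ν / 2 + 1) := Real.Gamma_pos_of_pos (by linarith)
      have hPdecomp : (∏ j ∈ Finset.range (m + 2), (ν / 2 - (j : ℝ)))
          = (∏ j ∈ Finset.range (m + 1), (ν / 2 - 1 - (j : ℝ))) * (ν / 2) := by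
        rw [Finset.prod_range_succ']
        congr 1
        · apply Finset.prod_congr rfl
          intro j _
          push_cast; ring
        · simp
      have hPsign : 0 < (-1 : ℝ) ^ (m + 1) * ∏ j ∈ Finset.range (m + 2), (ν / 2 - (j : ℝ)) := by
        rw [hPdecomp, ← mul_assoc]
        exact mul_pos (prod_sign (ν / 2) ha1' (m + 1)) ha0
      have hPX : 0 < (∏ j ∈ Finset.range (m + 2), (ν / 2 - (j : ℝ)))
          * Real.Gamma (ν / 2 - (((m + 1 : ℕ) : ℝ) + 1) + 1) := by
        rw [← hshift]; exact hGa1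
      rcases Nat.even_or_odd (m + 1) with he | ho
      · have h1 : ((-1 : ℝ)) ^ (m + 1) = 1 := he.neg_one_pow
        have hPpos : 0 < ∏ j ∈ Finset.range (m + 2), (ν / 2 - (j : ℝ)) := by
          rw [h1, one_mul] at hPsign; exact hPsign
        have hXpos : 0 < Real.Gamma (ν / 2 - (((m + 1 : ℕ) : ℝ) + 1) + 1) := by
          nlinarith [hPX, hPpos]
        have hnum : ((-1 : ℝ)) ^ (m + 1 + 1) = -1 := by rw [pow_succ, h1]; ring
        rw [hnum]
        apply div_nonpos_of_nonpos_of_nonneg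
        · linarith
        · exact le_of_lt (mul_pos hXpos hG2)
      · have h1 : ((-1 : ℝ)) ^ (m + 1) = -1 := ho.neg_one_pow
        have hPneg : (∏ j ∈ Finset.range (m + 2), (ν / 2 - (j : ℝ))) < 0 := by
          nlinarith [hPsign]
        have hXneg : Real.Gamma (ν / 2 - (((m + 1 : ℕ) : ℝ) + 1) + 1) < 0 := by
          nlinarith [hPX, hPneg]
        have hnum : ((-1 : ℝ)) ^ (m + 1 + 1) = 1 := by rw [pow_succ, h1]; ring
        rw [hnum, one_mul]
        exact div_nonpos_of_nonneg_of_nonpos hG1.le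
          (le_of_lt (mul_neg_of_neg_of_pos hXneg hG2))

theorem omegaCoeff_nonpos (ν : ℝ) (hν1 : 1 < ν) (hν2 : ν ≤ 2) (k : ℤ) (hk : 1 ≤ |k|) : omegaCoeff ν k ≤ 0 := by
  rcases le_or_gt 1 k with hk1 | hk1
  · obtain ⟨n, rfl⟩ : ∃ n : ℕ, k = (n : ℤ) + 1 := ⟨(k - 1).toNat, by omega⟩
    exact omegaCoeff_key ν hν1 hν2 n
  · have hk2 : k ≤ -1 := by
      rcases abs_cases k with ⟨h, _⟩ | ⟨h, _⟩ <;> omega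
    rw [← omegaCoeff_neg_arg]
    obtain ⟨n, h⟩ : ∃ n : ℕ, -k = (n : ℤ) + 1 := ⟨(-k - 1).toNat, by omega⟩
    rw [h]
    exact omegaCoeff_key ν hν1 hν2 n
end

section
/- For 1 < ν ≤ 2, the coefficients ω_k^{(ν)} := (-1)^k Γ(ν+1) / (Γ(ν/2 - k + 1) Γ(ν/2 + k + 1)) satisfy ∑_{k=-∞}^{∞} ω_k^{(ν)} = 0. -/
open Real Filter Topology Finset

theorem hasSum_sub_succ_of_antitone {u : ℕ → ℝ} {l : ℝ} (hu : Antitone u)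
    (hl : Tendsto u atTop (𝓝 l)) : HasSum (fun n ↦ u n - u (n + 1)) (u 0 - l) := by
  rw [hasSum_iff_tendsto_nat_of_nonneg (fun n ↦ sub_nonneg.2 (hu n.le_succ))]
  simp_rw [sum_range_sub']
  exact tendsto_const_nhds.sub hl

theorem tendsto_zero_of_le_one_sub_div_mul {u : ℕ → ℝ} {c : ℝ} (hc : 0 < c)
    (hu : ∀ n, 0 ≤ u n) (hstep : ∀ n : ℕ, u (n + 1) ≤ (1 - c / (n + 1)) * u n) :
    Tendsto u atTop (𝓝 0) := by
  have hbound : ∀ n, u n ≤ u 0 * exp (-c * ∑ i ∈ range n, 1 / ((i : ℝ) + 1)) := by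
    intro n
    induction n with
    | zero => simp
    | succ n ih =>
      calc u (n + 1) ≤ (1 - c / (n + 1)) * u n := hstep n
        _ ≤ exp (-(c / (n + 1))) * u n := by gcongr; exacts [hu n, one_sub_le_exp_neg _]
        _ ≤ exp (-(c / (n + 1))) * (u 0 * exp (-c * ∑ i ∈ range n, 1 / ((i : ℝ) + 1))) := by
          gcongr
        _ = u 0 * exp (-c * ∑ i ∈ range (n + 1), 1 / ((i : ℝ) + 1)) := by
          rw [sum_range_succ, mul_left_comm, ← exp_add]; ring_nf
  have hdecay :
      Tendsto (fun n ↦ u 0 * exp (-c * ∑ i ∈ range n, 1 / ((i : ℝ) + 1))) atTop (𝓝 0) := by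
    simpa using ((tendsto_exp_neg_atTop_nhds_zero.comp
      (tendsto_sum_range_one_div_nat_succ_atTop.const_mul_atTop hc)).const_mul (u 0))
  exact squeeze_zero hu hbound hdecay

theorem hasSum_sub_sub_one_of_odd {F : ℤ → ℝ} (hodd : ∀ k, F (-k - 1) = -F k)
    (hanti : Antitone fun n : ℕ ↦ F n) (hlim : Tendsto (fun n : ℕ ↦ F n) atTop (𝓝 0)) :
    HasSum (fun k ↦ F k - F (k - 1)) 0 := by
  set f : ℤ → ℝ := fun k ↦ F k - F (k - 1)
  have hpos : HasSum (fun n : ℕ ↦ f (n + 1)) (-F 0) := by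
    have h := (hasSum_sub_succ_of_antitone hanti hlim).neg
    rw [Nat.cast_zero, sub_zero] at h
    exact h.congr_fun fun n ↦ by simp [f]
  have hneg : HasSum (fun n : ℕ ↦ f (-(n + 1))) (-F 0) := by
    refine hpos.congr_fun fun n ↦ ?_
    simp only [f]
    rw [neg_add', hodd, show -(n : ℤ) - 1 - 1 = -((n : ℤ) + 1) - 1 by ring, hodd,
      add_sub_cancel_right]
    ring
  have hzero : f 0 = 2 * F 0 := by
    simp only [f, zero_sub]
    rw [show (-1 : ℤ) = -0 - 1 by ring, hodd]
    ring
  simpa [hzero, two_mul] using hpos.of_add_one_of_neg_add_one hneg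

/- `Real.Gamma` vanishes at its poles, so `(Gamma x)⁻¹` is the entire function `1 / Γ` and this
holds for every `x`. -/
theorem Real.inv_Gamma_eq_self_mul_inv_Gamma_add_one (x : ℝ) :
    (Gamma x)⁻¹ = x * (Gamma (x + 1))⁻¹ := by
  rcases eq_or_ne x 0 with rfl | hx
  · simp
  · rw [Gamma_add_one hx, mul_inv, mul_inv_cancel_left₀ hx]

noncomputable def omegaPrimitive (ν : ℝ) (k : ℤ) : ℝ :=
  (-1 : ℝ) ^ k * Gamma ν / (Gamma (ν / 2 + k + 1) * Gamma (ν / 2 - k))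

theorem omegaCoeff_eq_sub {ν : ℝ} (hν : ν ≠ 0) (k : ℤ) :
    omegaCoeff ν k = omegaPrimitive ν k - omegaPrimitive ν (k - 1) := by
  obtain ⟨s, rfl⟩ : ∃ s, ν = 2 * s := ⟨ν / 2, by ring⟩
  have hs : 2 * s / 2 = s := by ring
  simp only [omegaCoeff, omegaPrimitive, hs, div_eq_mul_inv,
    mul_inv, Int.cast_sub, Int.cast_one, zpow_sub_one₀ (by norm_num : (-1 : ℝ) ≠ 0)]
  rw [Gamma_add_one hν, inv_Gamma_eq_self_mul_inv_Gamma_add_one (s - k),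
    inv_Gamma_eq_self_mul_inv_Gamma_add_one (s + (k - 1) + 1)]
  ring_nf

theorem omegaPrimitive_neg_sub_one (ν : ℝ) (k : ℤ) :
    omegaPrimitive ν (-k - 1) = -omegaPrimitive ν k := by
  simp only [omegaPrimitive, zpow_sub_one₀ (by norm_num : (-1 : ℝ) ≠ 0), ← inv_zpow', inv_neg_one,
    Int.cast_sub, Int.cast_neg, Int.cast_one]
  ring_nf

theorem omegaPrimitive_add_one {ν : ℝ} {k : ℤ} (hk : ν / 2 + k + 1 ≠ 0) :
    omegaPrimitive ν (k + 1) = (k + 1 - ν / 2) / (ν / 2 + k + 1) * omegaPrimitive ν k := by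
  obtain ⟨s, rfl⟩ : ∃ s, ν = 2 * s := ⟨ν / 2, by ring⟩
  have hs : 2 * s / 2 = s := by ring
  simp only [hs] at hk ⊢
  simp only [omegaPrimitive, hs, div_eq_mul_inv, mul_inv,
    Int.cast_add, Int.cast_one, zpow_add_one₀ (by norm_num : (-1 : ℝ) ≠ 0)]
  rw [show s + (k + 1) + 1 = s + k + 1 + 1 by ring, Gamma_add_one hk,
    inv_Gamma_eq_self_mul_inv_Gamma_add_one (s - (k + 1))]
  field_simp
  ring_nf

theorem omegaPrimitive_zero_pos {ν : ℝ} (hν : 0 < ν) : 0 < omegaPrimitive ν 0 := by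
  simp only [omegaPrimitive, zpow_zero, one_mul, Int.cast_zero, add_zero, sub_zero]
  exact div_pos (Gamma_pos_of_pos hν)
    (mul_pos (Gamma_pos_of_pos (by positivity)) (Gamma_pos_of_pos (by positivity)))

theorem omegaPrimitive_natCast_succ {ν : ℝ} (hν : 0 ≤ ν) (n : ℕ) :
    omegaPrimitive ν (n + 1 : ℕ) = (n + 1 - ν / 2) / (ν / 2 + n + 1) * omegaPrimitive ν n := by
  rw [Nat.cast_succ, omegaPrimitive_add_one (by positivity)]
  push_cast
  rfl

theorem omegaPrimitive_natCast_nonneg {ν : ℝ} (hν0 : 0 < ν) (hν2 : ν ≤ 2) :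
    ∀ n : ℕ, 0 ≤ omegaPrimitive ν n
  | 0 => (omegaPrimitive_zero_pos hν0).le
  | n + 1 => by
    rw [omegaPrimitive_natCast_succ hν0.le]
    have : ν / 2 ≤ n + 1 := by have := n.cast_nonneg (α := ℝ); linarith
    exact mul_nonneg (div_nonneg (by linarith) (by positivity))
      (omegaPrimitive_natCast_nonneg hν0 hν2 n)

theorem omegaPrimitive_natCast_succ_le {ν : ℝ} (hν0 : 0 < ν) (hν2 : ν ≤ 2) (n : ℕ) :
    omegaPrimitive ν (n + 1 : ℕ) ≤ (1 - ν / 2 / (n + 1)) * omegaPrimitive ν n := by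
  rw [omegaPrimitive_natCast_succ hν0.le]
  gcongr
  · exact omegaPrimitive_natCast_nonneg hν0 hν2 n
  · rw [one_sub_div n.cast_add_one_ne_zero]
    have : ν / 2 ≤ n + 1 := by have := n.cast_nonneg (α := ℝ); linarith
    apply div_le_div_of_nonneg_left (by linarith) (by positivity)
    linarith

theorem hasSum_omegaCoeff {ν : ℝ} (hν0 : 0 < ν) (hν2 : ν ≤ 2) : HasSum (omegaCoeff ν) 0 := by
  have hstep := omegaPrimitive_natCast_succ_le hν0 hν2
  have hanti : Antitone fun n : ℕ ↦ omegaPrimitive ν n :=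
    antitone_nat_of_succ_le fun n ↦ (hstep n).trans <| mul_le_of_le_one_left
      (omegaPrimitive_natCast_nonneg hν0 hν2 n) (sub_le_self _ (by positivity))
  have hlim : Tendsto (fun n : ℕ ↦ omegaPrimitive ν n) atTop (𝓝 0) :=
    tendsto_zero_of_le_one_sub_div_mul (half_pos hν0)
      (omegaPrimitive_natCast_nonneg hν0 hν2) hstep
  exact (hasSum_sub_sub_one_of_odd (omegaPrimitive_neg_sub_one ν) hanti hlim).congr_fun
    (omegaCoeff_eq_sub hν0.ne')

theorem omegaCoeff_tsum_eq_zero (ν : ℝ) (hν1 : 1 < ν) (hν2 : ν ≤ 2) : ∑' k : ℤ, omegaCoeff ν k = 0 :=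
  (hasSum_omegaCoeff (by linarith) hν2).tsum_eq
end

section
/- The rational map φ(z) = (120 - 60z + 12z² - z³)/(120 + 60z + 12z² + z³) maps the open right half of the complex plane into the open unit disk: if Re(z) > 0 then |φ(z)| < 1. -/
/-!
Split the denominator `D(z) = 120 + 60z + 12z² + z³` into its even part `E = 120 + 12z²` and odd
part `O = 60z + z³`, so that `φ = (E - O)/(E + O)`. Then `‖E + O‖² - ‖E - O‖² = 4 Re(E · conj O)`,
and a direct expansion gives `Re(E · conj O) = 12 Re z · (600 + 70 x² + 30 y² + (x² + y²)²)`
with `z = x + iy`, which is positive when `Re z > 0`.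
-/

open Complex ComplexConjugate

theorem Complex.norm_sub_lt_norm_add_of_re_mul_conj_pos {a b : ℂ} (h : 0 < (a * conj b).re) :
    ‖a - b‖ < ‖a + b‖ := by
  have hsq : ‖a - b‖ ^ 2 < ‖a + b‖ ^ 2 := by
    rw [Complex.sq_norm, Complex.sq_norm, normSq_add, normSq_sub]
    linarith
  exact (pow_lt_pow_iff_left₀ (norm_nonneg _) (norm_nonneg _) two_ne_zero).1 hsq

theorem Complex.norm_sub_div_add_lt_one_of_re_mul_conj_pos {a b : ℂ}
    (h : 0 < (a * conj b).re) : ‖(a - b) / (a + b)‖ < 1 := by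
  have hlt := norm_sub_lt_norm_add_of_re_mul_conj_pos h
  rw [norm_div, div_lt_one ((norm_nonneg _).trans_lt hlt)]
  exact hlt

theorem re_pade33_even_mul_conj_odd (z : ℂ) :
    ((120 + 12 * z ^ 2) * conj (60 * z + z ^ 3)).re =
      12 * z.re * (600 + 70 * z.re ^ 2 + 30 * z.im ^ 2 + (z.re ^ 2 + z.im ^ 2) ^ 2) := by
  simp only [pow_succ, pow_zero, one_mul, map_add, map_mul, mul_re, mul_im, add_re, add_im,
    conj_re, conj_im, re_ofNat, im_ofNat]
  ring

/-- The `[3,3]` Padé approximant `φ(z) = (120 - 60z + 12z² - z³)/(120 + 60z + 12z² + z³)`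
of `e^{-z}` maps the open right half-plane into the open unit disk. -/
theorem pade33_maps_right_halfplane_to_unit_disk (z : ℂ) (hz : 0 < z.re) :
    ‖(120 - 60 * z + 12 * z ^ 2 - z ^ 3) /
      (120 + 60 * z + 12 * z ^ 2 + z ^ 3)‖ < 1 := by
  have hpos : 0 < ((120 + 12 * z ^ 2) * conj (60 * z + z ^ 3)).re := by
    rw [re_pade33_even_mul_conj_odd]
    positivity
  convert norm_sub_div_add_lt_one_of_re_mul_conj_pos hpos using 3 <;> ring
end

section
/- If φ(z) = (120 - 60z + 12z² - z³)/(120 + 60z + 12z² + z³), then for every real λ > 0 and every real k > 0, |φ(kλ)| < 1. -/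
/-- For every real `λ > 0` and time step `k > 0`, the `[3,3]` Padé approximant
`φ` of `e^{-z}` satisfies `|φ(kλ)| < 1`. -/
theorem pade33_abs_lt_one_of_pos (lam k : ℝ) (hlam : 0 < lam) (hk : 0 < k) :
    |(120 - 60 * (k * lam) + 12 * (k * lam) ^ 2 - (k * lam) ^ 3) /
      (120 + 60 * (k * lam) + 12 * (k * lam) ^ 2 + (k * lam) ^ 3)| < 1 := by
  have hz : 0 < k * lam := mul_pos hk hlam
  have hd : 0 < 120 + 60 * (k * lam) + 12 * (k * lam) ^ 2 + (k * lam) ^ 3 := by positivity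
  rw [abs_div, abs_of_pos hd, div_lt_one hd, abs_lt]
  constructor <;> nlinarith [pow_pos hz 3, sq_nonneg (k * lam)]
end

section
/- Let S be a real symmetric positive definite matrix and k > 0. Then the matrix 120·I + 60kS + 12(kS)² + (kS)³ is invertible, and the matrix M = (120·I + 60kS + 12(kS)² + (kS)³)⁻¹(120·I - 60kS + 12(kS)² - (kS)³) has spectral radius strictly less than 1. -/
/-!
Write `p = X³ + 12X² + 60X + 120`, so that the two matrices of the statement are `p(kS)` and
`p(-kS)`. Since `kS` is symmetric, `p(kS)⁻¹ p(-kS)` is the functional calculus of `kS` for the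
rational function `p(-x) / p(x)`: it is symmetric, hence has real spectrum, and by spectral
mapping its eigenvalues are `p(-x) / p(x)` for the eigenvalues `x > 0` of `kS`. For `x > 0`,
`p(x) - p(-x) = 2x(60 + x²)` and `p(x) + p(-x) = 2(120 + 12x²)` are positive, so `|p(-x)| < p(x)`.
-/

open Polynomial

-- The Padé approximant of `exp (-z)` is `p(-z) / p(z)` with `p = pade33Denom`.
noncomputable def pade33Denom : ℝ[X] := X ^ 3 + 12 * X ^ 2 + 60 * X + 120

section Pade33
variable {A : Type*} [Ring A] [Algebra ℝ A]

lemma aeval_pade33Denom (a : A) :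
    aeval a pade33Denom = (120 : ℝ) • (1 : A) + 60 • a + 12 • a ^ 2 + a ^ 3 := by
  simp only [pade33Denom, map_add, map_mul, map_pow, aeval_X, map_ofNat, ofNat_smul_eq_nsmul,
    nsmul_eq_mul, mul_one, Nat.cast_ofNat]
  abel

lemma aeval_pade33Denom_comp_neg_X (a : A) :
    aeval a (pade33Denom.comp (-X)) = (120 : ℝ) • (1 : A) - 60 • a + 12 • a ^ 2 - a ^ 3 := by
  simp only [pade33Denom, aeval_comp, map_neg, map_add, map_mul, map_pow, aeval_X, map_ofNat,
    ofNat_smul_eq_nsmul, nsmul_eq_mul, mul_one, Nat.cast_ofNat]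
  noncomm_ring

end Pade33

lemma pade33Denom_eval_pos {x : ℝ} (hx : 0 ≤ x) : 0 < pade33Denom.eval x := by
  simp only [pade33Denom, eval_add, eval_mul, eval_pow, eval_X, eval_ofNat]
  positivity

lemma abs_pade33Denom_eval_neg_lt {x : ℝ} (hx : 0 < x) :
    |pade33Denom.eval (-x)| < pade33Denom.eval x := by
  simp only [pade33Denom, eval_add, eval_mul, eval_pow, eval_X, eval_ofNat]
  rw [abs_lt]
  constructor <;> nlinarith [pow_pos hx 3]

lemma abs_pade33_lt_one {x : ℝ} (hx : 0 < x) :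
    |(pade33Denom.eval x)⁻¹ * (pade33Denom.comp (-X)).eval x| < 1 := by
  have hp := pade33Denom_eval_pos hx.le
  rw [eval_comp, eval_neg, eval_X, abs_mul, abs_inv, abs_of_pos hp, inv_mul_lt_one₀ hp]
  exact abs_pade33Denom_eval_neg_lt hx

namespace Matrix
variable {n : Type*} [Fintype n] [DecidableEq n]

theorem map_mem_spectrum_map_iff {K L : Type*} [Field K] [Field L] (f : K →+* L)
    (M : Matrix n n K) (r : K) : f r ∈ spectrum L (M.map f) ↔ r ∈ spectrum K M := by
  have hmap : algebraMap L (Matrix n n L) (f r) - M.map f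
      = (algebraMap K (Matrix n n K) r - M).map f := by
    simp [Matrix.map_sub, algebraMap_eq_diagonal, diagonal_map]
  simp only [spectrum.mem_iff, isUnit_iff_isUnit_det, isUnit_iff_ne_zero, not_not, hmap]
  change (f.mapMatrix _).det = 0 ↔ _
  rw [← RingHom.map_det, map_eq_zero]

theorem IsHermitian.spectrum_map_algebraMap {𝕜 : Type*} [RCLike 𝕜] {M : Matrix n n ℝ}
    (hM : M.IsHermitian) :
    spectrum 𝕜 (M.map (algebraMap ℝ 𝕜)) = algebraMap ℝ 𝕜 '' spectrum ℝ M := by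
  have hB : (M.map (algebraMap ℝ 𝕜)).IsHermitian := hM.map _ fun x => by simp
  ext μ
  constructor
  · intro hμ
    obtain ⟨_, ⟨i, rfl⟩, rfl⟩ := hB.spectrum_eq_image_range ▸ hμ
    rw [← RCLike.algebraMap_eq_ofReal, map_mem_spectrum_map_iff] at hμ
    exact ⟨_, hμ, congrFun RCLike.algebraMap_eq_ofReal _⟩
  · rintro ⟨r, hr, rfl⟩
    exact (map_mem_spectrum_map_iff _ M r).2 hr

section RationalCalculus
variable {𝕜 : Type*} [RCLike 𝕜] {A : Matrix n n 𝕜} {p q : ℝ[X]}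

theorem IsHermitian.isUnit_aeval (hA : A.IsHermitian) (hp : ∀ x ∈ spectrum ℝ A, p.eval x ≠ 0) :
    IsUnit (aeval A p) := by
  rw [← cfc_polynomial p A hA.isSelfAdjoint]
  exact (isUnit_cfc_iff _ A (A.finite_real_spectrum.continuousOn _) hA.isSelfAdjoint).2 hp

theorem IsHermitian.inv_aeval_mul_aeval_eq_cfc (hA : A.IsHermitian)
    (hp : ∀ x ∈ spectrum ℝ A, p.eval x ≠ 0) :
    (aeval A p)⁻¹ * aeval A q = cfc (fun x => (p.eval x)⁻¹ * q.eval x) A := by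
  have hcont (f : ℝ → ℝ) : ContinuousOn f (spectrum ℝ A) := A.finite_real_spectrum.continuousOn f
  rw [cfc_mul _ _ A (hcont _) (hcont _),
    cfc_inv (p.eval ·) A hp (hcont _) hA.isSelfAdjoint, cfc_polynomial p A hA.isSelfAdjoint,
    cfc_polynomial q A hA.isSelfAdjoint, nonsing_inv_eq_ringInverse]

end RationalCalculus

theorem IsHermitian.spectrum_map_inv_aeval_mul_aeval {𝕜 : Type*} [RCLike 𝕜] {A : Matrix n n ℝ}
    (hA : A.IsHermitian) {p q : ℝ[X]} (hp : ∀ x ∈ spectrum ℝ A, p.eval x ≠ 0) :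
    spectrum 𝕜 (((aeval A p)⁻¹ * aeval A q).map (algebraMap ℝ 𝕜))
      = algebraMap ℝ 𝕜 '' ((fun x => (p.eval x)⁻¹ * q.eval x) '' spectrum ℝ A) := by
  rw [hA.inv_aeval_mul_aeval_eq_cfc hp,
    IsHermitian.spectrum_map_algebraMap (cfc_predicate (fun x => (p.eval x)⁻¹ * q.eval x) A),
    cfc_map_spectrum _ A hA.isSelfAdjoint (A.finite_real_spectrum.continuousOn _)]

end Matrix

open scoped MatrixOrder

/-- For a real symmetric positive definite matrix `S` and `k > 0`, the matrix
`P = 120·I + 60kS + 12(kS)² + (kS)³` is invertible, and the iteration matrix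
`M = P⁻¹ (120·I - 60kS + 12(kS)² - (kS)³)` has spectral radius strictly less
than `1`: every complex eigenvalue `μ` of `M` satisfies `|μ| < 1`. -/
theorem pade33_iteration_matrix_spectral_radius_lt_one
    {n : Type*} [Fintype n] [DecidableEq n]
    (S : Matrix n n ℝ) (hS : S.PosDef) (k : ℝ) (hk : 0 < k) :
    IsUnit ((120 : ℝ) • (1 : Matrix n n ℝ) + 60 • (k • S) + 12 • (k • S) ^ 2 + (k • S) ^ 3) ∧
    ∀ μ ∈ spectrum ℂ
      ((((120 : ℝ) • (1 : Matrix n n ℝ) + 60 • (k • S) + 12 • (k • S) ^ 2 + (k • S) ^ 3)⁻¹ *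
        ((120 : ℝ) • (1 : Matrix n n ℝ) - 60 • (k • S) + 12 • (k • S) ^ 2 - (k • S) ^ 3)).map
          (algebraMap ℝ ℂ)),
      ‖μ‖ < 1 := by
  have hA : (k • S).PosDef := hS.smul hk
  have hp : ∀ x ∈ spectrum ℝ (k • S), pade33Denom.eval x ≠ 0 := fun x hx =>
    (pade33Denom_eval_pos (hA.isStrictlyPositive.spectrum_pos hx).le).ne'
  rw [← aeval_pade33Denom, ← aeval_pade33Denom_comp_neg_X,
    hA.isHermitian.spectrum_map_inv_aeval_mul_aeval hp]
  refine ⟨hA.isHermitian.isUnit_aeval hp, ?_⟩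
  rintro _ ⟨_, ⟨x, hx, rfl⟩, rfl⟩
  simpa using abs_pade33_lt_one (hA.isStrictlyPositive.spectrum_pos hx)
end

section
/- Let S be a real symmetric positive definite (m-1)×(m-1) matrix and k > 0, and let M = (120·I + 60kS + 12(kS)² + (kS)³)⁻¹(120·I - 60kS + 12(kS)² - (kS)³). Then for every vector U ∈ ℝ^{m-1}, ‖M U‖₂ ≤ ‖U‖₂, so the iterative scheme U_{j+1} = M U_j is unconditionally stable in the ℓ₂ norm. -/
/-!
Write `p(z) = 120 + 60z + 12z² + z³`, `A = kS`, `P = p(A)` and `Q = p(-A)`, so that `M = P⁻¹Q`.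
`P` and `Q` are commuting symmetric polynomials in `A`, `P` is positive definite, and
`P² - Q² = 28800 A + 3360 A³ + 48 A⁵` is positive semidefinite. Writing `U = P y`, we get
`M U = Q y`, hence `‖M U‖² = ‖Q y‖² ≤ ‖P y‖² = ‖U‖²`.
-/

open Matrix

namespace Matrix
variable {n R : Type*} [Fintype n] [CommRing R] [PartialOrder R] [StarRing R]
  [AddLeftMono R]

theorem star_mulVec_dotProduct_le_of_posSemidef_sub {P Q : Matrix n n R}
    (h : (Pᴴ * P - Qᴴ * Q).PosSemidef) (y : n → R) :
    star (Q *ᵥ y) ⬝ᵥ (Q *ᵥ y) ≤ star (P *ᵥ y) ⬝ᵥ (P *ᵥ y) := by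
  simpa only [star_mulVec, ← dotProduct_mulVec, mulVec_mulVec, sub_mulVec, dotProduct_sub,
    sub_nonneg] using h.dotProduct_mulVec_nonneg y

theorem star_inv_mul_mulVec_dotProduct_le [DecidableEq n] {P Q : Matrix n n R}
    (hP : IsUnit P.det) (hPQ : Commute P Q) (h : (Pᴴ * P - Qᴴ * Q).PosSemidef) (x : n → R) :
    star ((P⁻¹ * Q) *ᵥ x) ⬝ᵥ ((P⁻¹ * Q) *ᵥ x) ≤ star x ⬝ᵥ x := by
  obtain ⟨y, rfl⟩ : ∃ y, P *ᵥ y = x :=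
    ⟨P⁻¹ *ᵥ x, by rw [mulVec_mulVec, mul_nonsing_inv P hP, one_mulVec]⟩
  rw [mulVec_mulVec, mul_assoc, ← hPQ.eq, nonsing_inv_mul_cancel_left _ _ hP]
  exact star_mulVec_dotProduct_le_of_posSemidef_sub h y

end Matrix

section Pade

variable {R : Type*} [Ring R] [Algebra ℝ R]

/-- `pade33 (-z) / pade33 z` is the `[3/3]` Padé approximant of `exp (-z)`. -/
noncomputable def pade33 (a : R) : R := (120 : ℝ) • 1 + (60 : ℝ) • a + (12 : ℝ) • a ^ 2 + a ^ 3

theorem pade33_mul_self_sub_pade33_neg_mul_self (a : R) :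
    pade33 a * pade33 a - pade33 (-a) * pade33 (-a) =
      (28800 : ℝ) • a + (3360 : ℝ) • a ^ 3 + (48 : ℝ) • a ^ 5 := by
  simp only [pade33, Even.neg_pow even_two, Odd.neg_pow (by decide : Odd 3), smul_neg, mul_add,
    add_mul, smul_mul_assoc, mul_smul_comm, one_mul, mul_one, ← pow_succ, ← pow_succ', ← pow_add,
    mul_neg, neg_mul]
  module

theorem Commute.pade33_left {a b : R} (h : Commute a b) : Commute (pade33 a) b :=
  ((((Commute.one_left b).smul_left _).add_left (h.smul_left _)).add_left
    ((h.pow_left 2).smul_left _)).add_left (h.pow_left 3)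

theorem Commute.pade33 {a b : R} (h : Commute a b) : Commute (pade33 a) (pade33 b) :=
  h.pade33_left.symm.pade33_left.symm

theorem IsSelfAdjoint.pade33 [StarRing R] [StarModule ℝ R] {a : R} (ha : IsSelfAdjoint a) :
    IsSelfAdjoint (pade33 a) :=
  ((((IsSelfAdjoint.all _).smul (.one R)).add ((IsSelfAdjoint.all _).smul ha)).add
    ((IsSelfAdjoint.all _).smul (ha.pow 2))).add (ha.pow 3)

end Pade

namespace Matrix.PosSemidef
variable {n : Type*} [Fintype n] [DecidableEq n] {A : Matrix n n ℝ}

theorem pade33_posDef (hA : A.PosSemidef) : (pade33 A).PosDef :=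
  (((PosDef.one.smul (by norm_num : (0:ℝ) < 120)).add_posSemidef
    (hA.smul (by norm_num : (0:ℝ) ≤ 60))).add_posSemidef
    ((hA.pow 2).smul (by norm_num : (0:ℝ) ≤ 12))).add_posSemidef (hA.pow 3)

theorem pade33_mul_self_sub_pade33_neg_mul_self (hA : A.PosSemidef) :
    (pade33 A * pade33 A - pade33 (-A) * pade33 (-A)).PosSemidef := by
  rw [_root_.pade33_mul_self_sub_pade33_neg_mul_self]
  exact ((hA.smul (by norm_num)).add ((hA.pow 3).smul (by norm_num))).add
    ((hA.pow 5).smul (by norm_num))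

end Matrix.PosSemidef

/-- Unconditional ℓ₂-stability of the `[3,3]` Padé time-stepping scheme: for a
real symmetric positive definite matrix `S` and any time step `k > 0`, the
iteration matrix
`M = (120·I + 60kS + 12(kS)² + (kS)³)⁻¹ (120·I - 60kS + 12(kS)² - (kS)³)`
satisfies `‖M U‖₂ ≤ ‖U‖₂` for every vector `U`. -/
theorem pade33_iteration_matrix_l2_stable
    {n : Type*} [Fintype n] [DecidableEq n]
    (S : Matrix n n ℝ) (hS : S.PosDef) (k : ℝ) (hk : 0 < k)
    (M : Matrix n n ℝ)
    (hM : M = ((120 : ℝ) • (1 : Matrix n n ℝ) + 60 • (k • S) + 12 • (k • S) ^ 2 + (k • S) ^ 3)⁻¹ *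
      ((120 : ℝ) • (1 : Matrix n n ℝ) - 60 • (k • S) + 12 • (k • S) ^ 2 - (k • S) ^ 3))
    (U : n → ℝ) :
    Real.sqrt (∑ i, (M.mulVec U i) ^ 2) ≤ Real.sqrt (∑ i, (U i) ^ 2) := by
  set A := k • S
  have hA : A.PosSemidef := hS.posSemidef.smul hk.le
  have hM' : M = (pade33 A)⁻¹ * pade33 (-A) := by
    rw [hM, pade33, pade33]
    simp only [← Nat.cast_smul_eq_nsmul ℝ, Nat.cast_ofNat, Even.neg_pow even_two,
      Odd.neg_pow (by decide : Odd 3), smul_neg, ← sub_eq_add_neg]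
  have hP : (pade33 A).PosDef := hA.pade33_posDef
  have hQ : (pade33 (-A))ᴴ = pade33 (-A) := hA.isHermitian.isSelfAdjoint.neg.pade33
  have hPQ : Commute (pade33 A) (pade33 (-A)) := (Commute.refl A).neg_right.pade33
  have hdiff : ((pade33 A)ᴴ * pade33 A - (pade33 (-A))ᴴ * pade33 (-A)).PosSemidef := by
    rw [hP.isHermitian.eq, hQ]
    exact hA.pade33_mul_self_sub_pade33_neg_mul_self
  have key := star_inv_mul_mulVec_dotProduct_le ((isUnit_iff_isUnit_det _).mp hP.isUnit) hPQ hdiff U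
  rw [← hM'] at key
  simpa [dotProduct, sq] using Real.sqrt_le_sqrt key
end
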